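/- arXiv:2205.00278 — 6 statements merged into one kernel-verified Lean document; each statement's English description precedes it below -/
import Mathlib

section
/- The trait-centric recombinator dynamics satisfies trait payoff monotonicity: for any state x and any two traits a_d, a'_d in the support of the d-th marginal of x, u_x(a_d) > u_x(a'_d) if and only if ẋ(a_d)/x(a_d) > ẋ(a'_d)/x(a'_d), where ẋ(a_d) = Σ_{a_{-d}} ẋ(a_d, a_{-d}). -/
open Finset

noncomputable section

variable {D : Type*} [Fintype D] [DecidableEq D] {A : D → Type*}
  [∀ d, Fintype (A d)] [∀ d, DecidableEq (A d)]

/-- payoff of type `a` at state `x`: `u_x(a) = ∑ a', x(a') u(a,a')`. -/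
def typePay (u : (∀ d, A d) → (∀ d, A d) → ℝ) (x : (∀ d, A d) → ℝ) (a : ∀ d, A d) : ℝ :=
  ∑ a', x a' * u a a'

/-- mean payoff `u_x`. -/
def meanPay (u : (∀ d, A d) → (∀ d, A d) → ℝ) (x : (∀ d, A d) → ℝ) : ℝ :=
  ∑ a, x a * typePay u x a

/-- marginal frequency `x(a_d)` of trait `t` in dimension `d`. -/
def marg (x : (∀ d, A d) → ℝ) (d : D) (t : A d) : ℝ :=
  ∑ a, if a d = t then x a else 0

/-- marginal trait payoff `u_x(a_d)` (0 by div-by-zero convention when `x(a_d)=0`). -/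
def traitPay (u : (∀ d, A d) → (∀ d, A d) → ℝ) (x : (∀ d, A d) → ℝ) (d : D) (t : A d) : ℝ :=
  (∑ a, if a d = t then x a * typePay u x a else 0) / marg x d t

/-- the recombinator vector field `ẋ(a)` with recombination rate `r`. -/
def recomb (u : (∀ d, A d) → (∀ d, A d) → ℝ) (x : (∀ d, A d) → ℝ) (r : ℝ) (a : ∀ d, A d) : ℝ :=
  (1 - r) * x a * typePay u x a / meanPay u x
    + r * ∏ d, (marg x d (a d) * traitPay u x d (a d) / meanPay u x)
    - x a

/-- the trait-to-type ratio `m_x(a)`. -/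
def ttRatio (x : (∀ d, A d) → ℝ) (a : ∀ d, A d) : ℝ :=
  (∏ d, marg x d (a d)) / x a

/-- the `r`-payoff `z^r_x(a)`. -/
def rPay (u : (∀ d, A d) → (∀ d, A d) → ℝ) (x : (∀ d, A d) → ℝ) (r : ℝ) (a : ∀ d, A d) : ℝ :=
  (1 - r) * typePay u x a / meanPay u x
    + r * ttRatio x a * ∏ d, (traitPay u x d (a d) / meanPay u x)

section Aux

variable (u : (∀ d, A d) → (∀ d, A d) → ℝ) (x : (∀ d, A d) → ℝ)

lemma exists_pos (hx : ∀ a, 0 ≤ x a) (hsum : ∑ a, x a = 1) : ∃ a, 0 < x a := by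
  by_contra h
  push_neg at h
  have : ∀ a ∈ (univ : Finset (∀ d, A d)), x a = 0 := fun a _ => le_antisymm (h a) (hx a)
  rw [Finset.sum_eq_zero this] at hsum
  norm_num at hsum

lemma typePay_pos (hu : ∀ a a', 0 < u a a') (hx : ∀ a, 0 ≤ x a)
    (hsum : ∑ a, x a = 1) (a : ∀ d, A d) : 0 < typePay u x a := by
  obtain ⟨a₀, ha₀⟩ := exists_pos x hx hsum
  exact Finset.sum_pos' (fun a' _ => mul_nonneg (hx a') (hu a a').le)
    ⟨a₀, mem_univ _, mul_pos ha₀ (hu a a₀)⟩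

lemma meanPay_pos (hu : ∀ a a', 0 < u a a') (hx : ∀ a, 0 ≤ x a)
    (hsum : ∑ a, x a = 1) : 0 < meanPay u x := by
  obtain ⟨a₀, ha₀⟩ := exists_pos x hx hsum
  exact Finset.sum_pos' (fun a _ => mul_nonneg (hx a) (typePay_pos u x hu hx hsum a).le)
    ⟨a₀, mem_univ _, mul_pos ha₀ (typePay_pos u x hu hx hsum a₀)⟩

/-- `marg · traitPay` equals the "unconditional" sum, even when `marg = 0`. -/
lemma marg_mul_traitPay (hx : ∀ a, 0 ≤ x a) (d : D) (t : A d) :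
    marg x d t * traitPay u x d t = ∑ a, if a d = t then x a * typePay u x a else 0 := by
  by_cases hm : marg x d t = 0
  · have hz : ∀ a, a d = t → x a = 0 := by
      intro a ha
      rw [marg] at hm
      have h0 := (Finset.sum_eq_zero_iff_of_nonneg (fun a' _ => by
        by_cases h' : a' d = t
        · simpa [h'] using hx a'
        · simp [h'])).mp hm a (mem_univ a)
      simpa [ha] using h0
    rw [hm, zero_mul]
    symm
    refine Finset.sum_eq_zero fun a _ => ?_
    by_cases ha : a d = t
    · simp [ha, hz a ha]
    · simp [ha]
  · rw [traitPay, mul_div_cancel₀ _ hm]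

lemma sum_marg_mul_traitPay (hx : ∀ a, 0 ≤ x a) (d : D) :
    ∑ s, marg x d s * traitPay u x d s = meanPay u x := by
  simp only [marg_mul_traitPay u x hx d]
  rw [Finset.sum_comm]
  refine Finset.sum_congr rfl fun a _ => ?_
  simp [meanPay]

/-- the factorization of the recombination-term sum. -/
lemma sum_prod_eq (hu : ∀ a a', 0 < u a a') (hx : ∀ a, 0 ≤ x a)
    (hsum : ∑ a, x a = 1) (d : D) (t : A d) :
    (∑ a : ∀ d, A d, if a d = t then
        ∏ d', (marg x d' (a d') * traitPay u x d' (a d') / meanPay u x) else 0)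
      = marg x d t * traitPay u x d t / meanPay u x := by
  have hM := meanPay_pos u x hu hx hsum
  set g : ∀ d', A d' → ℝ := fun d' s => marg x d' s * traitPay u x d' s / meanPay u x with hg
  set h : ∀ d', A d' → ℝ := Function.update g d (fun s => if s = t then g d s else 0) with hh
  have step1 : (∑ a : ∀ d, A d, if a d = t then ∏ d', g d' (a d') else 0)
      = ∑ a : ∀ d, A d, ∏ d', h d' (a d') := by
    refine Finset.sum_congr rfl fun a _ => ?_
    by_cases hat : a d = t
    · rw [if_pos hat]
      refine Finset.prod_congr rfl fun d' _ => ?_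
      by_cases hd : d' = d
      · subst hd; simp [hh, hat]
      · simp [hh, Function.update_of_ne hd]
    · rw [if_neg hat]
      symm
      refine Finset.prod_eq_zero (mem_univ d) ?_
      simp [hh, hat]
  have step2 : (∑ a : ∀ d, A d, ∏ d', h d' (a d')) = ∏ d', ∑ s, h d' s :=
    (Fintype.prod_sum h).symm
  have hsum_g : ∀ d', ∑ s, g d' s = 1 := by
    intro d'
    rw [hg]
    simp only [← Finset.sum_div]
    rw [sum_marg_mul_traitPay u x hx d', div_self hM.ne']
  have step3 : (∏ d', ∑ s, h d' s) = g d t := by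
    rw [Fintype.prod_eq_single d (fun d' hd => by
      simp only [hh, Function.update_of_ne hd]; exact hsum_g d')]
    simp [hh]
  rw [step1, step2, step3]

lemma key_formula (hu : ∀ a a', 0 < u a a') (hx : ∀ a, 0 ≤ x a)
    (hsum : ∑ a, x a = 1) (r : ℝ) (d : D) (t : A d) (ht : 0 < marg x d t) :
    (∑ a, if a d = t then recomb u x r a else 0) / marg x d t
      = traitPay u x d t / meanPay u x * ((1 - r) + r) - 1 := by
  have hM := meanPay_pos u x hu hx hsum
  have e1 : (∑ a, if a d = t then recomb u x r a else 0)
      = (1 - r) * (marg x d t * traitPay u x d t) / meanPay u x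
        + r * (marg x d t * traitPay u x d t / meanPay u x) - marg x d t := by
    simp only [recomb]
    rw [show (∑ a : ∀ d, A d, if a d = t then
        (1 - r) * x a * typePay u x a / meanPay u x
          + r * ∏ d', (marg x d' (a d') * traitPay u x d' (a d') / meanPay u x)
          - x a else 0)
      = (∑ a : ∀ d, A d, if a d = t then (1 - r) * x a * typePay u x a / meanPay u x else 0)
        + (∑ a : ∀ d, A d, if a d = t then
            r * ∏ d', (marg x d' (a d') * traitPay u x d' (a d') / meanPay u x) else 0)
        - (∑ a : ∀ d, A d, if a d = t then x a else 0) from by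
      rw [← Finset.sum_add_distrib, ← Finset.sum_sub_distrib]
      exact Finset.sum_congr rfl fun a _ => by split_ifs <;> ring]
    have hA : (∑ a : ∀ d, A d,
          if a d = t then (1 - r) * x a * typePay u x a / meanPay u x else 0)
        = (1 - r) * (marg x d t * traitPay u x d t) / meanPay u x := by
      rw [marg_mul_traitPay u x hx d t, Finset.mul_sum, Finset.sum_div]
      exact Finset.sum_congr rfl fun a _ => by split_ifs <;> ring
    have hB : (∑ a : ∀ d, A d, if a d = t then
          r * ∏ d', (marg x d' (a d') * traitPay u x d' (a d') / meanPay u x) else 0)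
        = r * (marg x d t * traitPay u x d t / meanPay u x) := by
      rw [← sum_prod_eq u x hu hx hsum d t, Finset.mul_sum]
      exact Finset.sum_congr rfl fun a _ => by split_ifs <;> ring
    rw [hA, hB, ← marg]
  rw [e1]
  field_simp

end Aux

/-- the trait-centric recombinator dynamics is trait-payoff monotone. -/
theorem trait_payoff_monotone
    (u : (∀ d, A d) → (∀ d, A d) → ℝ) (hu : ∀ a a', 0 < u a a')
    (x : (∀ d, A d) → ℝ) (hx : ∀ a, 0 ≤ x a) (hsum : ∑ a, x a = 1)
    (r : ℝ) (hr0 : 0 ≤ r) (hr1 : r ≤ 1)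
    (d : D) (t t' : A d) (ht : 0 < marg x d t) (ht' : 0 < marg x d t') :
    traitPay u x d t > traitPay u x d t' ↔
      (∑ a, if a d = t then recomb u x r a else 0) / marg x d t >
        (∑ a, if a d = t' then recomb u x r a else 0) / marg x d t' := by
  have hM := meanPay_pos u x hu hx hsum
  rw [key_formula u x hu hx hsum r d t ht, key_formula u x hu hx hsum r d t' ht']
  have hone : (1 - r) + r = 1 := by ring
  rw [hone, mul_one, mul_one, gt_iff_lt, gt_iff_lt, sub_lt_sub_iff_right]
  exact (div_lt_div_iff_of_pos_right hM).symm
end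
end

section
/- A state x is stationary under the recombinator dynamics with rate r ∈ (0,1] and rectangular support if and only if (a) u_x(a_d) = u_x for every dimension d and every trait a_d with x(a_d) > 0, and (b) (1−r)·u_x(a)/u_x + r·m_x(a) = 1 for every a ∈ supp(x). -/
open Finset

noncomputable section

variable {D : Type*} [Fintype D] [DecidableEq D] {A : D → Type*}
  [∀ d, Fintype (A d)] [∀ d, DecidableEq (A d)]

section aux

set_option linter.unusedSectionVars false

lemma sum_prod_pi (g : ∀ d, A d → ℝ) :
    ∑ a : ∀ d, A d, ∏ d, g d (a d) = ∏ d, ∑ t, g d t := by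
  rw [Finset.prod_univ_sum, Fintype.piFinset_univ]

lemma sum_prod_pi_cond (g : ∀ d, A d → ℝ) (hg : ∀ d, ∑ t, g d t = 1) (d : D) (t : A d) :
    ∑ a : ∀ d, A d, (if a d = t then ∏ d', g d' (a d') else 0) = g d t := by
  classical
  have key : ∀ a : ∀ d, A d, (if a d = t then ∏ d', g d' (a d') else 0)
      = ∏ d', Function.update g d (fun s => if s = t then g d s else 0) d' (a d') := by
    intro a
    by_cases h : a d = t
    · simp only [h, if_true]
      refine Finset.prod_congr rfl fun d' _ => ?_
      by_cases hd : d' = d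
      · subst hd; simp [h]
      · simp [Function.update_of_ne hd]
    · simp only [h, if_false]
      symm
      refine Finset.prod_eq_zero (Finset.mem_univ d) ?_
      simp [h]
  rw [Finset.sum_congr rfl fun a _ => key a, sum_prod_pi]
  have h2 : ∀ d', (∑ s, Function.update g d (fun s => if s = t then g d s else 0) d' s)
      = if d' = d then g d t else 1 := by
    intro d'
    by_cases hd : d' = d
    · subst hd; simp
    · simp [Function.update_of_ne hd, hg d', hd]
  rw [Finset.prod_congr rfl fun d' _ => h2 d']
  simp

end aux

/-- a state with rectangular support is stationary under the
recombinator dynamics with rate `r ∈ (0,1]` iff (a) all supported traits earn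
the mean payoff, and (b) `(1−r)·u_x(a)/u_x + r·m_x(a) = 1` on the support. -/
theorem stationary_iff_trait_payoffs_and_ratio
    (u : (∀ d, A d) → (∀ d, A d) → ℝ) (hu : ∀ a a', 0 < u a a')
    (x : (∀ d, A d) → ℝ) (hx : ∀ a, 0 ≤ x a) (hsum : ∑ a, x a = 1)
    (r : ℝ) (hr0 : 0 < r) (hr1 : r ≤ 1)
    (hrect : ∀ a, 0 < x a ↔ ∀ d, 0 < marg x d (a d)) :
    (∀ a, recomb u x r a = 0) ↔
      ((∀ d : D, ∀ t : A d, 0 < marg x d t → traitPay u x d t = meanPay u x) ∧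
        (∀ a, 0 < x a →
          (1 - r) * typePay u x a / meanPay u x + r * ttRatio x a = 1)) := by
  classical
  obtain ⟨a₀, ha₀⟩ : ∃ a, 0 < x a := by
    by_contra h
    push_neg at h
    have hz : ∀ a, x a = 0 := fun a => le_antisymm (h a) (hx a)
    simp [hz] at hsum
  have htp : ∀ a, 0 < typePay u x a := fun a =>
    Finset.sum_pos' (fun a' _ => mul_nonneg (hx a') (hu a a').le)
      ⟨a₀, Finset.mem_univ _, mul_pos ha₀ (hu a a₀)⟩
  have hmp : 0 < meanPay u x :=
    Finset.sum_pos' (fun a _ => mul_nonneg (hx a) (htp a).le)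
      ⟨a₀, Finset.mem_univ _, mul_pos ha₀ (htp a₀)⟩
  have hmargnn : ∀ (d : D) (t : A d), 0 ≤ marg x d t := by
    intro d t
    refine Finset.sum_nonneg fun a _ => ?_
    by_cases h : a d = t <;> simp [h, hx a]
  have hle : ∀ (a : ∀ d, A d) (d : D), x a ≤ marg x d (a d) := by
    intro a d
    have := Finset.single_le_sum (f := fun a' => if a' d = a d then x a' else 0)
      (fun i _ => by by_cases h : i d = a d <;> simp [h, hx i]) (Finset.mem_univ a)
    simpa [marg] using this
  have hmargmul : ∀ (d : D) (t : A d), marg x d t * traitPay u x d t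
      = ∑ a, if a d = t then x a * typePay u x a else 0 := by
    intro d t
    rcases (hmargnn d t).eq_or_lt with h | h
    · have hz : ∀ a : ∀ d, A d, a d = t → x a = 0 := by
        intro a hat
        have h2 := hle a d
        rw [hat, ← h] at h2
        exact le_antisymm h2 (hx a)
      rw [← h, zero_mul]
      symm
      refine Finset.sum_eq_zero fun a _ => ?_
      by_cases hat : a d = t
      · simp [hat, hz a hat]
      · simp [hat]
    · unfold traitPay
      rw [mul_comm, div_mul_cancel₀ _ h.ne']
  have hsummarg : ∀ d : D, ∑ t, marg x d t * traitPay u x d t = meanPay u x := by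
    intro d
    rw [Finset.sum_congr rfl fun t _ => hmargmul d t, Finset.sum_comm]
    unfold meanPay
    refine Finset.sum_congr rfl fun a _ => ?_
    simp [Finset.sum_ite_eq]
  have hg1 : ∀ d : D, ∑ s, marg x d s * traitPay u x d s / meanPay u x = 1 := by
    intro d
    rw [← Finset.sum_div, hsummarg d, div_self hmp.ne']
  have hprod : ∀ a : ∀ d, A d, 0 < x a →
      (∀ d : D, ∀ t : A d, 0 < marg x d t → traitPay u x d t = meanPay u x) →
      ∏ d, (marg x d (a d) * traitPay u x d (a d) / meanPay u x) = ttRatio x a * x a := by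
    intro a hxa htr
    have hmd := (hrect a).1 hxa
    have he : ∀ d : D, marg x d (a d) * traitPay u x d (a d) / meanPay u x = marg x d (a d) := by
      intro d
      rw [htr d (a d) (hmd d), mul_div_assoc, div_self hmp.ne', mul_one]
    rw [Finset.prod_congr rfl fun d _ => he d]
    unfold ttRatio
    rw [div_mul_cancel₀ _ hxa.ne']
  constructor
  · intro hstat
    have ha_main : ∀ (d : D) (t : A d), 0 < marg x d t → traitPay u x d t = meanPay u x := by
      intro d t hmt
      have h0 : ∑ a, (if a d = t then recomb u x r a else 0) = 0 := by simp [hstat]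
      have hsplit : ∀ a : ∀ d, A d, (if a d = t then recomb u x r a else 0)
          = ((1 - r) / meanPay u x * (if a d = t then x a * typePay u x a else 0)
            + r * (if a d = t
                then ∏ d', (marg x d' (a d') * traitPay u x d' (a d') / meanPay u x) else 0)
            - (if a d = t then x a else 0)) := by
        intro a
        by_cases hat : a d = t
        · simp only [hat, if_true]
          unfold recomb
          ring
        · simp [hat]
      rw [Finset.sum_congr rfl fun a _ => hsplit a, Finset.sum_sub_distrib,
        Finset.sum_add_distrib, ← Finset.mul_sum, ← Finset.mul_sum, ← hmargmul d t,
        sum_prod_pi_cond (fun d s => marg x d s * traitPay u x d s / meanPay u x) hg1 d t,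
        show (∑ a, if a d = t then x a else 0) = marg x d t from rfl] at h0
      have hX : marg x d t * traitPay u x d t / meanPay u x = marg x d t := by
        linear_combination h0
      have h2 := (div_eq_iff hmp.ne').mp hX
      exact mul_left_cancel₀ hmt.ne' h2
    refine ⟨ha_main, fun a hxa => ?_⟩
    have h1 := hstat a
    unfold recomb at h1
    rw [hprod a hxa ha_main] at h1
    have h2 : x a * ((1 - r) * typePay u x a / meanPay u x + r * ttRatio x a - 1) = 0 := by
      linear_combination h1
    rcases mul_eq_zero.mp h2 with h3 | h3
    · exact absurd h3 hxa.ne'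
    · linarith
  · rintro ⟨ha, hb⟩ a
    rcases (hx a).eq_or_lt with h | h
    · obtain ⟨d, hd⟩ : ∃ d : D, marg x d (a d) = 0 := by
        by_contra hc
        push_neg at hc
        have hall : ∀ d : D, 0 < marg x d (a d) := fun d =>
          lt_of_le_of_ne (hmargnn d (a d)) (Ne.symm (hc d))
        have h2 := (hrect a).2 hall
        rw [← h] at h2
        exact lt_irrefl _ h2
      unfold recomb
      rw [Finset.prod_eq_zero (Finset.mem_univ d) (by rw [hd]; ring), ← h]
      ring
    · have h1 := hb a h
      unfold recomb
      rw [hprod a h ha]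
      linear_combination x a * h1
end
end

section
/- If x is a stationary state of the combinator dynamics (recombination rate r = 1) with rectangular support, then x is trait independent: x(a) = ∏_d x(a_d) for all a ∈ A with x(a) > 0, i.e., m_x(a) = 1 for all a ∈ supp(x). -/
open Finset

noncomputable section

variable {D : Type*} [Fintype D] [DecidableEq D] {A : D → Type*}
  [∀ d, Fintype (A d)] [∀ d, DecidableEq (A d)]

/-! At `r = 1` stationarity says `x(a) = ∏_d g_d(a_d)` with `g_d(t) = x(t) u_x(t) / u_x`, so `x`
has product form. The `d`-marginal of such a function is `g_d(t) ∏_{e ≠ d} c_e` with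
`c_e = ∑_t g_e(t)`, and `∏_e c_e = ∑_a x(a) = 1`; hence the product of the marginals is `x`
itself, at every type. -/

lemma prod_update_apply {ι : Type*} [Fintype ι] [DecidableEq ι] {κ : ι → Type*} {M : Type*}
    [CommMonoid M] (f : ∀ i, κ i → M) (i : ι) (g : κ i → M) (a : ∀ j, κ j) :
    ∏ j, Function.update f i g j (a j) = g (a i) * ∏ j ∈ univ.erase i, f j (a j) := by
  simp_rw [Function.apply_update (fun j (h : κ j → M) => h (a j)) f i g]
  rw [prod_update_of_mem (mem_univ i), sdiff_singleton_eq_erase]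

lemma marg_prod_apply (f : ∀ d, A d → ℝ) (d : D) (t : A d) :
    marg (fun a => ∏ e, f e (a e)) d t = f d t * ∏ e ∈ univ.erase d, ∑ s, f e s := by
  have hslice : ∀ a : ∀ e, A e, (if a d = t then ∏ e, f e (a e) else 0)
      = ∏ e, Function.update f d (Pi.single t (f d t)) e (a e) := by
    intro a
    rw [prod_update_apply, Pi.single_apply, ← mul_prod_erase _ _ (mem_univ d)]
    split_ifs with h
    · rw [h]
    · rw [zero_mul]
  simp only [marg, hslice]
  rw [← Fintype.prod_sum]
  simp_rw [Function.apply_update (fun e (h : A e → ℝ) => ∑ s, h s) f d]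
  rw [prod_update_of_mem (mem_univ d), sdiff_singleton_eq_erase, Fintype.sum_pi_single']

lemma prod_marg_prod_of_sum_eq_one (f : ∀ d, A d → ℝ)
    (hf : ∑ a : ∀ d, A d, ∏ e, f e (a e) = 1) (a : ∀ d, A d) :
    ∏ d, marg (fun a => ∏ e, f e (a e)) d (a d) = ∏ d, f d (a d) := by
  have hc : ∏ e, ∑ s, f e s = 1 := by rw [Fintype.prod_sum, hf]
  have hc_erase : ∀ d, ∏ e ∈ univ.erase d, ∑ s, f e s = (∑ s, f d s)⁻¹ := fun d =>
    eq_inv_of_mul_eq_one_right ((mul_prod_erase univ (fun e => ∑ s, f e s) (mem_univ d)).trans hc)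
  simp only [marg_prod_apply, prod_mul_distrib, hc_erase, prod_inv_distrib, hc, inv_one, mul_one]

lemma exists_eq_prod_of_recomb_one_eq_zero (u : (∀ d, A d) → (∀ d, A d) → ℝ)
    (x : (∀ d, A d) → ℝ) (hstat : ∀ a, recomb u x 1 a = 0) :
    ∃ f : ∀ d, A d → ℝ, x = fun a => ∏ e, f e (a e) :=
  ⟨fun d t => marg x d t * traitPay u x d t / meanPay u x, funext fun a => by
    have h := hstat a
    rw [recomb, sub_self, zero_mul, zero_mul, zero_div, zero_add, one_mul, sub_eq_zero] at h
    exact h.symm⟩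

theorem combinator_stationary_trait_independent_general
    (u : (∀ d, A d) → (∀ d, A d) → ℝ)
    (x : (∀ d, A d) → ℝ) (hsum : ∑ a, x a = 1)
    (hstat : ∀ a, recomb u x 1 a = 0) :
    ∀ a, 0 < x a → x a = ∏ d, marg x d (a d) := by
  intro a _
  obtain ⟨f, rfl⟩ := exists_eq_prod_of_recomb_one_eq_zero u x hstat
  exact (prod_marg_prod_of_sum_eq_one f hsum a).symm

/-- a stationary state of the combinator dynamics (`r = 1`) with
rectangular support is trait independent. -/
theorem combinator_stationary_trait_independent
    (u : (∀ d, A d) → (∀ d, A d) → ℝ) (hu : ∀ a a', 0 < u a a')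
    (x : (∀ d, A d) → ℝ) (hx : ∀ a, 0 ≤ x a) (hsum : ∑ a, x a = 1)
    (hrect : ∀ a, 0 < x a ↔ ∀ d, 0 < marg x d (a d))
    (hstat : ∀ a, recomb u x 1 a = 0) :
    ∀ a, 0 < x a → x a = ∏ d, marg x d (a d) :=
  combinator_stationary_trait_independent_general u x hsum hstat
end
end

section
/- Let z̄ = max_{a_{-d} ∈ S} (1−r)u_x(a_d,a_{-d}) with 0 < r < 1, let positive weights w(a_{-d}) sum to 1 over S where w(a_{-d}) = ∏_{d'≠d} x(a_{d'}) with each x(a_{d'}) ∈ (0,1], and define h(z) = Σ_{a_{-d} ∈ S} z·r·w(a_{-d}) / (z − (1−r)u_x(a_d,a_{-d})) for z > z̄. Then h is strictly decreasing on (z̄, ∞), tends to +∞ as z ↓ z̄, tends to r < 1 as z → ∞, and hence there is a unique z₀ > z̄ with h(z₀) = 1. -/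
open Finset

/-- the auxiliary function `h` used to prove uniqueness of the stable
partner distribution is strictly decreasing on `(z̄, ∞)`, blows up at `z̄⁺`,
tends to `r < 1` at `∞`, and hence crosses the value 1 exactly once. -/
theorem partner_h_unique_crossing {S : Type*} [Fintype S] [Nonempty S]
    (r : ℝ) (hr0 : 0 < r) (hr1 : r < 1)
    (uv : S → ℝ) (huv : ∀ s, 0 < uv s)
    (w : S → ℝ) (hw : ∀ s, 0 < w s ∧ w s ≤ 1) (hwsum : ∑ s, w s = 1) :
    ∀ zbar h : _, zbar = Finset.univ.sup' Finset.univ_nonempty (fun s => (1 - r) * uv s) →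
      h = (fun z : ℝ => ∑ s, z * r * w s / (z - (1 - r) * uv s)) →
    StrictAntiOn h (Set.Ioi zbar) ∧
      Filter.Tendsto h (nhdsWithin zbar (Set.Ioi zbar)) Filter.atTop ∧
      Filter.Tendsto h Filter.atTop (nhds r) ∧
      r < 1 ∧
      (∃! z₀ : ℝ, zbar < z₀ ∧ h z₀ = 1) := by
  intro zbar h hzbar hh
  have hr1' : (0:ℝ) < 1 - r := by linarith
  set c : S → ℝ := fun s => (1 - r) * uv s with hcdef
  have hcpos : ∀ s, 0 < c s := fun s => mul_pos hr1' (huv s)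
  have hcle : ∀ s, c s ≤ zbar := fun s => by
    rw [hzbar]; exact Finset.le_sup' _ (mem_univ s)
  have hzbarpos : 0 < zbar :=
    lt_of_lt_of_le (hcpos (Classical.arbitrary S)) (hcle _)
  have hlt : ∀ z ∈ Set.Ioi zbar, ∀ s, c s < z := fun z hz s =>
    lt_of_le_of_lt (hcle s) hz
  -- strict antitonicity
  have hanti : StrictAntiOn h (Set.Ioi zbar) := by
    intro a ha b hb hab
    rw [hh]
    apply Finset.sum_lt_sum_of_nonempty Finset.univ_nonempty
    intro s _
    have hda : 0 < a - c s := sub_pos.2 (hlt a ha s)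
    have hdb : 0 < b - c s := sub_pos.2 (hlt b hb s)
    rw [div_lt_div_iff₀ hdb hda]
    nlinarith [mul_pos (mul_pos hr0 (hw s).1) (mul_pos (hcpos s) (sub_pos.2 hab))]
  -- blow-up at zbar⁺
  obtain ⟨s₀, -, hs₀⟩ := Finset.exists_mem_eq_sup' (Finset.univ_nonempty (α := S))
    (fun s => (1 - r) * uv s)
  have hzc : zbar = c s₀ := by rw [hzbar, hs₀]
  have htop : Filter.Tendsto h (nhdsWithin zbar (Set.Ioi zbar)) Filter.atTop := by
    have h2 : Filter.Tendsto (fun z => (z - zbar)⁻¹)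
        (nhdsWithin zbar (Set.Ioi zbar)) Filter.atTop := by
      apply tendsto_inv_nhdsGT_zero.comp
      rw [tendsto_nhdsWithin_iff]
      constructor
      · have : Filter.Tendsto (fun z : ℝ => z - zbar) (nhds zbar) (nhds (zbar - zbar)) :=
          (continuous_id.sub continuous_const).tendsto zbar
        simpa using this.mono_left nhdsWithin_le_nhds
      · filter_upwards [self_mem_nhdsWithin] with z hz
        exact sub_pos.2 (Set.mem_Ioi.1 hz)
    have h1 : Filter.Tendsto (fun z => z * r * w s₀)
        (nhdsWithin zbar (Set.Ioi zbar)) (nhds (zbar * r * w s₀)) :=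
      (((continuous_id.mul continuous_const).mul continuous_const).tendsto zbar).mono_left
        nhdsWithin_le_nhds
    have hmul : Filter.Tendsto (fun z => z * r * w s₀ * (z - zbar)⁻¹)
        (nhdsWithin zbar (Set.Ioi zbar)) Filter.atTop :=
      Filter.Tendsto.pos_mul_atTop (mul_pos (mul_pos hzbarpos hr0) (hw s₀).1) h1 h2
    apply Filter.tendsto_atTop_mono' _ _ hmul
    filter_upwards [self_mem_nhdsWithin] with z hz
    rw [hh]
    have hle : z * r * w s₀ * (z - zbar)⁻¹ = z * r * w s₀ / (z - c s₀) := by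
      rw [hzc, div_eq_mul_inv]
    rw [hle]
    apply Finset.single_le_sum (f := fun s => z * r * w s / (z - c s)) _ (mem_univ s₀)
    intro s _
    have hzpos : 0 < z := lt_trans hzbarpos hz
    exact le_of_lt (div_pos (mul_pos (mul_pos hzpos hr0) (hw s).1)
      (sub_pos.2 (hlt z hz s)))
  -- limit at infinity
  have hinf : Filter.Tendsto h Filter.atTop (nhds r) := by
    have hterm : ∀ s : S, Filter.Tendsto (fun z => z * r * w s / (z - c s))
        Filter.atTop (nhds (r * w s)) := by
      intro s
      have hd : Filter.Tendsto (fun z : ℝ => z - c s) Filter.atTop Filter.atTop :=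
        Filter.tendsto_atTop_add_const_right _ _ Filter.tendsto_id
      have h0 : Filter.Tendsto (fun z : ℝ => r * w s * c s / (z - c s))
          Filter.atTop (nhds 0) :=
        Filter.Tendsto.div_atTop tendsto_const_nhds hd
      have := h0.const_add (r * w s)
      apply Filter.Tendsto.congr' _ (by simpa using this)
      filter_upwards [Filter.eventually_gt_atTop (c s)] with z hz
      have hne : z - c s ≠ 0 := (sub_pos.2 hz).ne'
      field_simp
      ring
    have hsum := tendsto_finset_sum Finset.univ (fun s _ => hterm s)
    have : ∑ s, r * w s = r := by rw [← Finset.mul_sum, hwsum, mul_one]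
    rw [this] at hsum
    rw [hh]
    exact hsum
  -- continuity on Ioi zbar
  have hcont : ContinuousOn h (Set.Ioi zbar) := by
    rw [hh]
    apply continuousOn_finset_sum
    intro s _
    apply ContinuousOn.div
    · exact ((continuousOn_id.mul continuousOn_const).mul continuousOn_const)
    · exact continuousOn_id.sub continuousOn_const
    · intro z hz
      exact sub_ne_zero.2 (hlt z hz s).ne'
  refine ⟨hanti, htop, hinf, hr1, ?_⟩
  -- existence of a point where h > 1
  obtain ⟨z₁, hz₁gt, hz₁⟩ :
      ∃ z₁, 1 < h z₁ ∧ z₁ ∈ Set.Ioi zbar :=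
    ((htop.eventually_gt_atTop 1).and self_mem_nhdsWithin).exists
  obtain ⟨z₂, hz₂lt, hz₂gt⟩ : ∃ z₂, h z₂ < 1 ∧ z₁ < z₂ :=
    ((hinf.eventually_lt_const hr1).and (Filter.eventually_gt_atTop z₁)).exists
  have hsub : Set.Icc z₁ z₂ ⊆ Set.Ioi zbar := fun x hx =>
    lt_of_lt_of_le hz₁ hx.1
  obtain ⟨z₀, hz₀mem, hz₀⟩ :=
    intermediate_value_Icc' (le_of_lt hz₂gt) (hcont.mono hsub)
      (Set.mem_Icc.2 ⟨le_of_lt hz₂lt, le_of_lt hz₁gt⟩)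
  have hz₀Ioi : z₀ ∈ Set.Ioi zbar := hsub hz₀mem
  refine ⟨z₀, ⟨hz₀Ioi, hz₀⟩, ?_⟩
  rintro y ⟨hy1, hy2⟩
  exact hanti.injOn hy1 hz₀Ioi (by rw [hy2, hz₀])
end

section
/- In the emotional hawk-dove game, for the stationary state x placing mass 1/2 on hv and 1/2 on dv, the stable partner distribution of the invading trait e assigns to the hawk trait the weight η(h) = (√(169r² − 4r + 4) − 13r + 2)/4; in particular η(h) is the unique solution in (0,1) of η = (1−r)·42η/(42η + 36(1−η)) + r/2. -/
/-- in the emotional hawk-dove game at the stationary state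
`(1/2)δ_hv + (1/2)δ_dv`, the stable partner distribution of the invading trait
`e` puts weight `η(h) = (√(169r² − 4r + 4) − 13r + 2)/4` on the hawk trait; it
is the unique solution in `(0,1)` of
`η = (1−r)·42η/(42η + 36(1−η)) + r/2`. -/
theorem emotional_hd_stable_partner (r : ℝ) (hr0 : 0 < r) (hr1 : r < 1) :
    ∀ η : ℝ, η = (Real.sqrt (169 * r ^ 2 - 4 * r + 4) - 13 * r + 2) / 4 →
      ((0 < η ∧ η < 1) ∧
        η = (1 - r) * (42 * η) / (42 * η + 36 * (1 - η)) + r / 2 ∧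
        ∀ η' : ℝ, 0 < η' → η' < 1 →
          η' = (1 - r) * (42 * η') / (42 * η' + 36 * (1 - η')) + r / 2 → η' = η) := by
  intro η hη
  have hE : (0:ℝ) ≤ 169 * r ^ 2 - 4 * r + 4 := by nlinarith [sq_nonneg (13*r - 2/13)]
  set s := Real.sqrt (169 * r ^ 2 - 4 * r + 4) with hs
  have hs2 : s ^ 2 = 169 * r ^ 2 - 4 * r + 4 := Real.sq_sqrt hE
  have hsnn : 0 ≤ s := Real.sqrt_nonneg _
  have hslt : s < 13 * r + 2 := by nlinarith
  have hsgt : 13 * r - 2 < s := by nlinarith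
  have hsgt2 : 2 - 13 * r < s := by nlinarith
  have hη0 : 0 < η := by rw [hη]; nlinarith
  have hη1 : η < 1 := by rw [hη]; nlinarith
  have hq : 2 * η ^ 2 + (13 * r - 2) * η - 6 * r = 0 := by
    rw [hη]; linear_combination (1/8) * hs2
  have hden : 42 * η + 36 * (1 - η) ≠ 0 := by nlinarith
  refine ⟨⟨hη0, hη1⟩, ?_, ?_⟩
  · rw [eq_comm, div_add' _ _ _ hden, div_eq_iff hden]
    linear_combination (-3) * hq
  · intro η' h0 h1 heq'
    have hden' : 42 * η' + 36 * (1 - η') ≠ 0 := by nlinarith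
    have hq' : 2 * η' ^ 2 + (13 * r - 2) * η' - 6 * r = 0 := by
      rw [div_add' _ _ _ hden', eq_div_iff hden'] at heq'
      linear_combination heq' / 3
    have hfac : (η' - η) * (2 * (η' + η) + 13 * r - 2) = 0 := by
      linear_combination hq' - hq
    rcases mul_eq_zero.mp hfac with h | h
    · linarith
    · exfalso
      have : 0 < 2 * (η' + η) + 13 * r - 2 := by
        rw [hη]; nlinarith
      linarith
end

section
/- With η(h)(r) = (√(169r² − 4r + 4) − 13r + 2)/4 and payoffs u_x(he) = 42, u_x(de) = 36, mean payoff u_x = 40, the invading-trait payoff u_x(e) = 42η(h) + 36(1−η(h)) exceeds u_x = 40 if and only if r < 1/6 (equivalently η(h)(r) > 2/3 iff r < 1/6). -/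
/-! Since `42η + 36(1 − η) = 36 + 6η`, both claims say `η > 2/3`, i.e.
`√(169r² − 4r + 4) > 13r + 2/3`. When the right side is negative this holds and so does
`r < 1/6`; otherwise squaring turns it into `(64/3)(1/6 − r) > 0`. -/

lemma two_thirds_lt_hawk_weight_iff (r : ℝ) :
    2 / 3 < (Real.sqrt (169 * r ^ 2 - 4 * r + 4) - 13 * r + 2) / 4 ↔ r < 1 / 6 := by
  have hshift : 2 / 3 < (Real.sqrt (169 * r ^ 2 - 4 * r + 4) - 13 * r + 2) / 4 ↔
      13 * r + 2 / 3 < Real.sqrt (169 * r ^ 2 - 4 * r + 4) := by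
    constructor <;> intro h <;> linarith
  rw [hshift]
  rcases le_or_gt 0 (13 * r + 2 / 3) with hnonneg | hneg
  · have hgap : 169 * r ^ 2 - 4 * r + 4 - (13 * r + 2 / 3) ^ 2 = 64 / 3 * (1 / 6 - r) := by ring
    rw [Real.lt_sqrt hnonneg]
    constructor <;> intro h <;> linarith
  · exact iff_of_true (hneg.trans_le (Real.sqrt_nonneg _)) (by linarith)

lemma invading_payoff_gt_mean_iff (η : ℝ) : 42 * η + 36 * (1 - η) > 40 ↔ η > 2 / 3 := by
  constructor <;> intro h <;> linarith

theorem emotional_hd_invading_payoff_iff_general (r : ℝ) :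
    ∀ η : ℝ, η = (Real.sqrt (169 * r ^ 2 - 4 * r + 4) - 13 * r + 2) / 4 →
      (42 * η + 36 * (1 - η) > 40 ↔ r < 1 / 6) ∧ (η > 2 / 3 ↔ r < 1 / 6) := by
  rintro η rfl
  have hweight := two_thirds_lt_hawk_weight_iff r
  exact ⟨(invading_payoff_gt_mean_iff _).trans hweight, hweight⟩

/-- with `η(h)(r) = (√(169r² − 4r + 4) − 13r + 2)/4` and payoffs
`u_x(he) = 42`, `u_x(de) = 36`, mean payoff `u_x = 40`, the invading-trait
payoff `42η + 36(1−η)` exceeds 40 iff `r < 1/6` (equivalently `η > 2/3` iff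
`r < 1/6`). -/
theorem emotional_hd_invading_payoff_iff (r : ℝ) (hr0 : 0 < r) (hr1 : r < 1) :
    ∀ η : ℝ, η = (Real.sqrt (169 * r ^ 2 - 4 * r + 4) - 13 * r + 2) / 4 →
      (42 * η + 36 * (1 - η) > 40 ↔ r < 1 / 6) ∧ (η > 2 / 3 ↔ r < 1 / 6) :=
  emotional_hd_invading_payoff_iff_general r
end
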